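/- Let α, β, γ > 0 with α ≥ min(β,γ)/2, and suppose V_ℓ ≤ c·2^{-βℓ} and C_ℓ ≤ c·2^{γℓ} for all ℓ ≥ 0 and some constant c > 0. For ε ∈ (0,1) set L = ⌈log₂(1/ε)/α⌉ and M_ℓ = ⌈ε^{-2} √(V_ℓ/C_ℓ) Σ_{j=0}^L √(V_j C_j)⌉. Then Σ_{ℓ=0}^L M_ℓ C_ℓ ≤ C(ε^{-2} + ε^{-γ/α}) when β > γ, ≤ C(L² ε^{-2} + ε^{-γ/α}) when β = γ, and ≤ C ε^{-2-(γ-β)/α} when β < γ, for a constant C independent of ε. -/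

import Mathlib

/-!
With `S = Σ_{j ≤ L} √(V_j C_j)`, rounding `M_ℓ` up costs at most one extra sample per level, so
`Σ M_ℓ C_ℓ ≤ ε⁻² S² + Σ_{ℓ ≤ L} C_ℓ`. The rates give `√(V_j C_j) ≤ c q^j` with `q = 2^{(γ-β)/2}`
and `C_ℓ ≤ c 2^{γℓ}`, so both sums are geometric, and `L ≤ log₂(1/ε)/α + 1` turns `2^{δL}` into
`2^δ ε^{-δ/α}`. The three regimes are `q < 1` (bounded `S`), `q = 1` (`S ≤ c (L+1)`) and `q > 1`
(`S² ≲ ε^{-(γ-β)/α}`); in the last one `β ≤ 2α` makes `ε^{-γ/α}` the smaller term.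
-/

open Finset Real

lemma geom_sum_range_le_of_one_lt {K : Type*} [Field K] [LinearOrder K] [IsStrictOrderedRing K]
    {x : K} (hx : 1 < x) (n : ℕ) : ∑ i ∈ range n, x ^ i ≤ x ^ n / (x - 1) := by
  rw [geom_sum_eq hx.ne']
  gcongr
  exact sub_le_self _ zero_le_one

lemma geom_sum_range_le_of_lt_one {K : Type*} [Field K] [LinearOrder K] [IsStrictOrderedRing K]
    {x : K} (h0 : 0 ≤ x) (h1 : x < 1) (n : ℕ) : ∑ i ∈ range n, x ^ i ≤ 1 / (1 - x) := by
  have := geom_sum_Ico_le_of_lt_one (m := 0) (n := n) h0 h1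
  rwa [pow_zero, ← range_eq_Ico] at this

lemma sqrt_div_mul_self {x y : ℝ} (hy : 0 < y) : √(x / y) * y = √(x * y) := by
  calc √(x / y) * y = √(x / y) * √(y ^ 2) := by rw [sqrt_sq hy.le]
    _ = √(x / y * y ^ 2) := (sqrt_mul' _ (sq_nonneg y)).symm
    _ = √(x * y) := by congr 1; field_simp

lemma sum_ceil_mul_sqrt_div_mul_le {ι : Type*} (s : Finset ι) {μ : ℝ} (hμ : 0 ≤ μ)
    (V C : ι → ℝ) (hC : ∀ i ∈ s, 0 < C i) :
    ∑ i ∈ s, (⌈μ * √(V i / C i) * ∑ j ∈ s, √(V j * C j)⌉₊ : ℝ) * C i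
      ≤ μ * (∑ j ∈ s, √(V j * C j)) ^ 2 + ∑ i ∈ s, C i := by
  set S := ∑ j ∈ s, √(V j * C j)
  calc _ ≤ ∑ i ∈ s, (μ * √(V i / C i) * S + 1) * C i := by
        gcongr with i hi
        · exact (hC i hi).le
        · exact (Nat.ceil_lt_add_one (by positivity)).le
    _ = ∑ i ∈ s, (μ * S * √(V i * C i) + C i) := sum_congr rfl fun i hi => by
        rw [← sqrt_div_mul_self (hC i hi)]; ring
    _ = μ * S ^ 2 + ∑ i ∈ s, C i := by rw [sum_add_distrib, ← mul_sum, sq, mul_assoc]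

lemma mul_add_mul_le_add_mul_add {a b x y : ℝ} (ha : 0 ≤ a) (hb : 0 ≤ b) (hx : 0 ≤ x)
    (hy : 0 ≤ y) : a * x + b * y ≤ (a + b) * (x + y) := by
  nlinarith [mul_nonneg ha hy, mul_nonneg hb hx]

noncomputable def mlmcDepth (α ε : ℝ) : ℕ := ⌈logb 2 (1 / ε) / α⌉₊

section Depth

variable {α ε : ℝ}

lemma one_le_mlmcDepth (hα : 0 < α) (hε : 0 < ε) (hε1 : ε < 1) : 1 ≤ mlmcDepth α ε :=
  Nat.one_le_iff_ne_zero.mpr <| (Nat.ceil_pos.mpr <| div_pos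
    (logb_pos one_lt_two <| (one_lt_div hε).mpr hε1) hα).ne'

lemma two_rpow_pow_mlmcDepth_le {δ : ℝ} (hα : 0 < α) (hδ : 0 ≤ δ) (hε : 0 < ε) (hε1 : ε ≤ 1) :
    ((2 : ℝ) ^ δ) ^ mlmcDepth α ε ≤ 2 ^ δ * ε ^ (-(δ / α)) := by
  have hlog : 0 ≤ logb 2 (1 / ε) / α :=
    div_nonneg (logb_nonneg one_lt_two <| (one_le_div hε).mpr hε1) hα.le
  have hdepth : (mlmcDepth α ε : ℝ) ≤ logb 2 (1 / ε) / α + 1 := (Nat.ceil_lt_add_one hlog).le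
  calc ((2 : ℝ) ^ δ) ^ mlmcDepth α ε = 2 ^ (δ * mlmcDepth α ε) :=
        (rpow_mul_natCast zero_le_two _ _).symm
    _ ≤ 2 ^ (δ * (logb 2 (1 / ε) / α + 1)) := by gcongr; norm_num
    _ = 2 ^ δ * (2 ^ logb 2 (1 / ε)) ^ (δ / α) := by
        rw [← rpow_mul zero_le_two, ← rpow_add two_pos]; ring_nf
    _ = 2 ^ δ * ε ^ (-(δ / α)) := by
        rw [rpow_logb two_pos (by norm_num) (by positivity), one_div, inv_rpow hε.le,
          rpow_neg hε.le]

lemma geom_sum_two_rpow_le {δ : ℝ} (hα : 0 < α) (hδ : 0 < δ) (hε : 0 < ε) (hε1 : ε ≤ 1) :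
    ∑ ℓ ∈ range (mlmcDepth α ε + 1), ((2 : ℝ) ^ δ) ^ ℓ
      ≤ (2 ^ δ) ^ 2 / (2 ^ δ - 1) * ε ^ (-(δ / α)) := by
  have hq : 1 < (2 : ℝ) ^ δ := one_lt_rpow one_lt_two hδ
  calc _ ≤ ((2 : ℝ) ^ δ) ^ (mlmcDepth α ε + 1) / (2 ^ δ - 1) := geom_sum_range_le_of_one_lt hq _
    _ = 2 ^ δ / (2 ^ δ - 1) * ((2 : ℝ) ^ δ) ^ mlmcDepth α ε := by rw [pow_succ]; ring
    _ ≤ 2 ^ δ / (2 ^ δ - 1) * (2 ^ δ * ε ^ (-(δ / α))) := by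
        gcongr; exact two_rpow_pow_mlmcDepth_le hα hδ.le hε hε1
    _ = _ := by ring

end Depth

lemma sqrt_mul_le_of_rates {β γ c v w : ℝ} {ℓ : ℕ} (hc : 0 ≤ c) (hw : 0 ≤ w)
    (hv : v ≤ c * 2 ^ (-β * ℓ)) (hwℓ : w ≤ c * 2 ^ (γ * ℓ)) :
    √(v * w) ≤ c * ((2 : ℝ) ^ ((γ - β) / 2)) ^ ℓ := by
  have hsq : (c * ((2 : ℝ) ^ ((γ - β) / 2)) ^ ℓ) ^ 2 = c * 2 ^ (-β * ℓ) * (c * 2 ^ (γ * ℓ)) := by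
    rw [mul_pow, ← rpow_mul_natCast zero_le_two, ← rpow_mul_natCast zero_le_two,
      mul_mul_mul_comm, ← rpow_add two_pos, sq]
    congr 2; push_cast; ring
  rw [sqrt_le_left (by positivity), hsq]
  exact mul_le_mul hv hwℓ hw (by positivity)

structure MLMCRates (c β γ : ℝ) (V C : ℕ → ℝ) : Prop where
  cost_pos : ∀ ℓ, 0 < C ℓ
  variance_le : ∀ ℓ : ℕ, V ℓ ≤ c * 2 ^ (-β * ℓ)
  cost_le : ∀ ℓ : ℕ, C ℓ ≤ c * 2 ^ (γ * ℓ)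

noncomputable def mlmcCost (ε : ℝ) (L : ℕ) (V C : ℕ → ℝ) : ℝ :=
  ∑ ℓ ∈ range (L + 1),
    (⌈ε ^ (-2 : ℝ) * √(V ℓ / C ℓ) * ∑ j ∈ range (L + 1), √(V j * C j)⌉₊ : ℝ) * C ℓ

section Cost

variable {α β γ c : ℝ} {V C : ℕ → ℝ}

lemma MLMCRates.const_pos (h : MLMCRates c β γ V C) : 0 < c := by
  simpa using (h.cost_pos 0).trans_le (h.cost_le 0)

lemma mlmcCost_le_of_rates (hα : 0 < α) (hγ : 0 < γ) (h : MLMCRates c β γ V C)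
    {ε : ℝ} (hε : 0 < ε) (hε1 : ε ≤ 1) :
    mlmcCost ε (mlmcDepth α ε) V C
      ≤ ε ^ (-2 : ℝ) * (c * ∑ j ∈ range (mlmcDepth α ε + 1), ((2 : ℝ) ^ ((γ - β) / 2)) ^ j) ^ 2
        + c * ((2 ^ γ) ^ 2 / (2 ^ γ - 1)) * ε ^ (-(γ / α)) := by
  have hc := h.const_pos.le
  set L := mlmcDepth α ε
  have hsqrt : ∑ j ∈ range (L + 1), √(V j * C j)
      ≤ c * ∑ j ∈ range (L + 1), ((2 : ℝ) ^ ((γ - β) / 2)) ^ j := by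
    rw [mul_sum]
    exact sum_le_sum fun j _ =>
      sqrt_mul_le_of_rates hc (h.cost_pos j).le (h.variance_le j) (h.cost_le j)
  have hcost : ∑ ℓ ∈ range (L + 1), C ℓ ≤ c * ((2 ^ γ) ^ 2 / (2 ^ γ - 1)) * ε ^ (-(γ / α)) := by
    calc _ ≤ ∑ ℓ ∈ range (L + 1), c * ((2 : ℝ) ^ γ) ^ ℓ :=
          sum_le_sum fun ℓ _ => (h.cost_le ℓ).trans_eq (by rw [rpow_mul_natCast zero_le_two])
      _ ≤ _ := by
          rw [← mul_sum, mul_assoc]; gcongr; exact geom_sum_two_rpow_le hα hγ hε hε1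
  refine (sum_ceil_mul_sqrt_div_mul_le _ (rpow_nonneg hε.le _) V C
    fun ℓ _ => h.cost_pos ℓ).trans ?_
  gcongr

lemma mlmcCost_le_of_gt (hα : 0 < α) (hγ : 0 < γ) (h : MLMCRates c β γ V C) (hβγ : γ < β) :
    ∃ K > 0, ∀ ε : ℝ, 0 < ε → ε < 1 →
      mlmcCost ε (mlmcDepth α ε) V C ≤ K * (ε ^ (-2 : ℝ) + ε ^ (-(γ / α))) := by
  set q : ℝ := 2 ^ ((γ - β) / 2)
  have hq : q < 1 := rpow_lt_one_of_one_lt_of_neg one_lt_two (by linarith)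
  have hc := h.const_pos
  have hg : 0 < (2 : ℝ) ^ γ - 1 := sub_pos.mpr (one_lt_rpow one_lt_two hγ)
  set D := c * ((2 ^ γ) ^ 2 / (2 ^ γ - 1))
  refine ⟨(c / (1 - q)) ^ 2 + D, by positivity, fun ε hε hε1 => ?_⟩
  have hG : c * ∑ j ∈ range (mlmcDepth α ε + 1), q ^ j ≤ c / (1 - q) := by
    rw [div_eq_mul_one_div]; gcongr; exact geom_sum_range_le_of_lt_one (by positivity) hq _
  calc _ ≤ ε ^ (-2 : ℝ) * (c * ∑ j ∈ range (mlmcDepth α ε + 1), q ^ j) ^ 2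
          + D * ε ^ (-(γ / α)) := mlmcCost_le_of_rates hα hγ h hε hε1.le
    _ ≤ (c / (1 - q)) ^ 2 * ε ^ (-2 : ℝ) + D * ε ^ (-(γ / α)) := by
        rw [mul_comm ((c / (1 - q)) ^ 2)]; gcongr
    _ ≤ _ := mul_add_mul_le_add_mul_add (by positivity) (by positivity) (by positivity)
        (by positivity)

lemma mlmcCost_le_of_eq (hα : 0 < α) (hγ : 0 < γ) (h : MLMCRates c γ γ V C) :
    ∃ K > 0, ∀ ε : ℝ, 0 < ε → ε < 1 → mlmcCost ε (mlmcDepth α ε) V C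
      ≤ K * ((mlmcDepth α ε : ℝ) ^ 2 * ε ^ (-2 : ℝ) + ε ^ (-(γ / α))) := by
  have hc := h.const_pos
  have hg : 0 < (2 : ℝ) ^ γ - 1 := sub_pos.mpr (one_lt_rpow one_lt_two hγ)
  set D := c * ((2 ^ γ) ^ 2 / (2 ^ γ - 1))
  refine ⟨(2 * c) ^ 2 + D, by positivity, fun ε hε hε1 => ?_⟩
  set L := mlmcDepth α ε
  have hL : (1 : ℝ) ≤ L := by exact_mod_cast one_le_mlmcDepth hα hε hε1
  have hG : c * ∑ j ∈ range (L + 1), ((2 : ℝ) ^ ((γ - γ) / 2)) ^ j ≤ 2 * c * L := by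
    simp only [sub_self, zero_div, rpow_zero, one_pow, sum_const, card_range, nsmul_one]
    push_cast; nlinarith
  calc _ ≤ ε ^ (-2 : ℝ) * (c * ∑ j ∈ range (L + 1), ((2 : ℝ) ^ ((γ - γ) / 2)) ^ j) ^ 2
          + D * ε ^ (-(γ / α)) := mlmcCost_le_of_rates hα hγ h hε hε1.le
    _ ≤ ε ^ (-2 : ℝ) * (2 * c * L) ^ 2 + D * ε ^ (-(γ / α)) := by gcongr
    _ = (2 * c) ^ 2 * ((L : ℝ) ^ 2 * ε ^ (-2 : ℝ)) + D * ε ^ (-(γ / α)) := by ring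
    _ ≤ _ := mul_add_mul_le_add_mul_add (by positivity) (by positivity) (by positivity)
        (by positivity)

lemma mlmcCost_le_of_lt (hα : 0 < α) (hγ : 0 < γ) (h : MLMCRates c β γ V C) (hβγ : β < γ)
    (hβα : β ≤ 2 * α) :
    ∃ K > 0, ∀ ε : ℝ, 0 < ε → ε < 1 →
      mlmcCost ε (mlmcDepth α ε) V C ≤ K * ε ^ (-2 - (γ - β) / α) := by
  set q : ℝ := 2 ^ ((γ - β) / 2)
  have hq : 0 < q - 1 := sub_pos.mpr (one_lt_rpow one_lt_two (by linarith))
  have hc := h.const_pos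
  have hg : 0 < (2 : ℝ) ^ γ - 1 := sub_pos.mpr (one_lt_rpow one_lt_two hγ)
  set D := c * ((2 ^ γ) ^ 2 / (2 ^ γ - 1))
  set B := c * (q ^ 2 / (q - 1))
  refine ⟨B ^ 2 + D, by positivity, fun ε hε hε1 => ?_⟩
  have hG : c * ∑ j ∈ range (mlmcDepth α ε + 1), q ^ j ≤ B * ε ^ (-((γ - β) / 2 / α)) := by
    rw [mul_assoc]; gcongr; exact geom_sum_two_rpow_le hα (by linarith) hε hε1.le
  have hB : ε ^ (-2 : ℝ) * (B * ε ^ (-((γ - β) / 2 / α))) ^ 2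
      = B ^ 2 * ε ^ (-2 - (γ - β) / α) := by
    rw [mul_pow, ← rpow_mul_natCast hε.le, mul_left_comm, ← rpow_add hε]
    congr 2; push_cast; ring
  have hγα : ε ^ (-(γ / α)) ≤ ε ^ (-2 - (γ - β) / α) := by
    apply rpow_le_rpow_of_exponent_ge hε hε1.le
    have : β / α ≤ 2 := (div_le_iff₀ hα).mpr (by linarith)
    rw [sub_div]; linarith
  calc _ ≤ ε ^ (-2 : ℝ) * (c * ∑ j ∈ range (mlmcDepth α ε + 1), q ^ j) ^ 2
          + D * ε ^ (-(γ / α)) := mlmcCost_le_of_rates hα hγ h hε hε1.le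
    _ ≤ B ^ 2 * ε ^ (-2 - (γ - β) / α) + D * ε ^ (-2 - (γ - β) / α) := by
        rw [← hB]; gcongr
    _ = _ := by ring

end Cost

theorem mlmc_cost_bound_general
    (α β γ c : ℝ) (hα : 0 < α) (hγ : 0 < γ)
    (hαβγ : α ≥ min β γ / 2)
    (V C : ℕ → ℝ) (hCpos : ∀ ℓ, 0 < C ℓ)
    (hV : ∀ ℓ : ℕ, V ℓ ≤ c * 2 ^ (-β * ℓ)) (hC : ∀ ℓ : ℕ, C ℓ ≤ c * 2 ^ (γ * ℓ)) :
    ∃ K > 0, ∀ ε : ℝ, 0 < ε → ε < 1 →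
      ∀ L : ℕ, L = ⌈Real.logb 2 (1 / ε) / α⌉₊ →
      ∀ M : ℕ → ℕ,
        (∀ ℓ, M ℓ = ⌈ε ^ (-2 : ℝ) * Real.sqrt (V ℓ / C ℓ) *
          ∑ j ∈ Finset.range (L + 1), Real.sqrt (V j * C j)⌉₊) →
        ((β > γ → ∑ ℓ ∈ Finset.range (L + 1), (M ℓ : ℝ) * C ℓ
            ≤ K * (ε ^ (-2 : ℝ) + ε ^ (-(γ / α)))) ∧
         (β = γ → ∑ ℓ ∈ Finset.range (L + 1), (M ℓ : ℝ) * C ℓ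
            ≤ K * ((L : ℝ) ^ 2 * ε ^ (-2 : ℝ) + ε ^ (-(γ / α)))) ∧
         (β < γ → ∑ ℓ ∈ Finset.range (L + 1), (M ℓ : ℝ) * C ℓ
            ≤ K * ε ^ (-2 - (γ - β) / α))) := by
  have hrates : MLMCRates c β γ V C := ⟨hCpos, hV, hC⟩
  have hcost : ∀ (ε : ℝ) (L : ℕ) (M : ℕ → ℕ), L = ⌈logb 2 (1 / ε) / α⌉₊ →
      (∀ ℓ, M ℓ = ⌈ε ^ (-2 : ℝ) * √(V ℓ / C ℓ) * ∑ j ∈ range (L + 1), √(V j * C j)⌉₊) →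
      ∑ ℓ ∈ range (L + 1), (M ℓ : ℝ) * C ℓ = mlmcCost ε (mlmcDepth α ε) V C := by
    rintro ε L M rfl hM
    simp only [hM]
    rfl
  rcases lt_trichotomy β γ with hβγ | rfl | hβγ
  · have hβα : β ≤ 2 * α := by linarith [min_eq_left hβγ.le ▸ hαβγ]
    obtain ⟨K, hK, hbound⟩ := mlmcCost_le_of_lt hα hγ hrates hβγ hβα
    refine ⟨K, hK, fun ε hε hε1 L hL M hM => ⟨fun h => absurd h hβγ.not_gt,
      fun h => absurd h hβγ.ne, fun _ => (hcost ε L M hL hM).trans_le (hbound ε hε hε1)⟩⟩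
  · obtain ⟨K, hK, hbound⟩ := mlmcCost_le_of_eq hα hγ hrates
    refine ⟨K, hK, fun ε hε hε1 L hL M hM => ⟨fun h => absurd h (lt_irrefl β), fun _ => ?_,
      fun h => absurd h (lt_irrefl β)⟩⟩
    rw [hcost ε L M hL hM, hL]
    exact hbound ε hε hε1
  · obtain ⟨K, hK, hbound⟩ := mlmcCost_le_of_gt hα hγ hrates hβγ
    refine ⟨K, hK, fun ε hε hε1 L hL M hM =>
      ⟨fun _ => (hcost ε L M hL hM).trans_le (hbound ε hε hε1), fun h => absurd h hβγ.ne',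
        fun h => absurd h hβγ.not_gt⟩⟩

/-- MLMC cost bound (Giles): with `V_ℓ ≤ c 2^{-βℓ}`, `C_ℓ ≤ c 2^{γℓ}`,
`L = ⌈log₂(1/ε)/α⌉` and `M_ℓ = ⌈ε^{-2} √(V_ℓ/C_ℓ) Σ_j √(V_j C_j)⌉`, the total cost
`Σ_ℓ M_ℓ C_ℓ` is `O(ε^{-2} + ε^{-γ/α})` if `β > γ`, `O(L² ε^{-2} + ε^{-γ/α})` if `β = γ`,
and `O(ε^{-2-(γ-β)/α})` if `β < γ`, with constant independent of `ε`. -/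
theorem mlmc_cost_bound
    (α β γ c : ℝ) (hα : 0 < α) (hβ : 0 < β) (hγ : 0 < γ) (hc : 0 < c)
    (hαβγ : α ≥ min β γ / 2)
    (V C : ℕ → ℝ) (hVpos : ∀ ℓ, 0 < V ℓ) (hCpos : ∀ ℓ, 0 < C ℓ)
    (hV : ∀ ℓ : ℕ, V ℓ ≤ c * 2 ^ (-β * ℓ)) (hC : ∀ ℓ : ℕ, C ℓ ≤ c * 2 ^ (γ * ℓ)) :
    ∃ K > 0, ∀ ε : ℝ, 0 < ε → ε < 1 →
      ∀ L : ℕ, L = ⌈Real.logb 2 (1 / ε) / α⌉₊ →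
      ∀ M : ℕ → ℕ,
        (∀ ℓ, M ℓ = ⌈ε ^ (-2 : ℝ) * Real.sqrt (V ℓ / C ℓ) *
          ∑ j ∈ Finset.range (L + 1), Real.sqrt (V j * C j)⌉₊) →
        ((β > γ → ∑ ℓ ∈ Finset.range (L + 1), (M ℓ : ℝ) * C ℓ
            ≤ K * (ε ^ (-2 : ℝ) + ε ^ (-(γ / α)))) ∧
         (β = γ → ∑ ℓ ∈ Finset.range (L + 1), (M ℓ : ℝ) * C ℓ
            ≤ K * ((L : ℝ) ^ 2 * ε ^ (-2 : ℝ) + ε ^ (-(γ / α)))) ∧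
         (β < γ → ∑ ℓ ∈ Finset.range (L + 1), (M ℓ : ℝ) * C ℓ
            ≤ K * ε ^ (-2 - (γ - β) / α))) :=
  mlmc_cost_bound_general α β γ c hα hγ hαβγ V C hCpos hV hC
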